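/- arXiv:1010.4051 — 7 statements merged into one kernel-verified Lean document; each statement's English description precedes it below -/
import Mathlib

section
/- The automorphism group of a finitely generated residually finite group is residually finite. -/
/-- A group `G` is residually finite if every `g ≠ 1` is sent to a non-identity element
by some homomorphism of `G` onto a finite group. -/
def ResiduallyFinite (G : Type*) [Group G] : Prop :=
  ∀ g : G, g ≠ 1 →
    ∃ (H : Type) (_ : Group H) (_ : Finite H) (f : G →* H),
      Function.Surjective f ∧ f g ≠ 1

/-!
An automorphism `φ ≠ 1` moves some `g`, and residual finiteness gives a finite group `H` and
`f : G →* H` with `f (φ g) ≠ f g`, so `φ` acts nontrivially on `G →* H` by precomposition.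
Since `G` is finitely generated, `G →* H` is finite, so this action is a homomorphism from
`MulAut G` to a finite permutation group that does not kill `φ`.
-/

universe u

/-- Cayley's theorem moves the finite target group into `Type`, as `ResiduallyFinite` demands. -/
theorem ResiduallyFinite.of_forall_exists_monoidHom {G : Type*} [Group G]
    (h : ∀ g : G, g ≠ 1 →
      ∃ (Q : Type u) (_ : Group Q) (_ : Finite Q) (f : G →* Q), f g ≠ 1) :
    ResiduallyFinite G := by
  intro g hg
  obtain ⟨Q, _, _, f, hfg⟩ := h g hg
  let cayley : Q →* Equiv.Perm (Fin (Nat.card Q)) :=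
    (Finite.equivFin Q).permCongrHom.toMonoidHom.comp (MulAction.toPermHom Q Q)
  have hcayley : Function.Injective cayley :=
    (Finite.equivFin Q).permCongrHom.injective.comp MulAction.toPerm_injective
  let F := cayley.comp f
  refine ⟨F.range, inferInstance, inferInstance, F.rangeRestrict, F.rangeRestrict_surjective, ?_⟩
  intro hF
  have hFg : cayley (f g) = cayley 1 := by simpa [F] using congrArg Subtype.val hF
  exact hfg (hcayley hFg)

theorem Group.FG.finite_monoidHom {G : Type*} [Group G] (hfg : Group.FG G)
    (H : Type*) [Monoid H] [Finite H] : Finite (G →* H) := by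
  obtain ⟨S, hS, hSfin⟩ := Group.fg_iff.mp hfg
  have : Finite S := hSfin
  refine Finite.of_injective (fun f : G →* H => fun s : S => f s) fun f₁ f₂ h => ?_
  exact MonoidHom.eq_of_eqOn_dense hS fun x hx => congrFun h ⟨x, hx⟩

theorem ResiduallyFinite.exists_comp_ne {G : Type*} [Group G] (hG : ResiduallyFinite G)
    {ψ : MulAut G} (hψ : ψ ≠ 1) :
    ∃ (H : Type) (_ : Group H) (_ : Finite H) (f : G →* H), f.comp ψ.toMonoidHom ≠ f := by
  obtain ⟨g, hg⟩ : ∃ g, ψ g ≠ g := by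
    by_contra! h
    exact hψ (MulEquiv.ext h)
  obtain ⟨H, _, _, f, -, hf⟩ := hG (ψ g * g⁻¹) (mul_inv_eq_one.not.mpr hg)
  refine ⟨H, inferInstance, inferInstance, f, fun hcomp => hf ?_⟩
  rw [map_mul, map_inv, mul_inv_eq_one]
  exact DFunLike.congr_fun hcomp g

/-- The action of `MulAut G` on `G →* H` by `ψ • f = f ∘ ψ⁻¹`. -/
def MulAut.precompPerm (G H : Type*) [Group G] [Monoid H] : MulAut G →* Equiv.Perm (G →* H) where
  toFun ψ := MulEquiv.monoidHomCongrLeftEquiv ψ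
  map_one' := MulEquiv.monoidHomCongrLeftEquiv_refl
  map_mul' ψ χ := MulEquiv.monoidHomCongrLeftEquiv_trans χ ψ

/-- The automorphism group of a finitely generated residually finite group is
residually finite. -/
theorem aut_residuallyFinite (G : Type*) [Group G] (hfg : Group.FG G)
    (hG : ResiduallyFinite G) : ResiduallyFinite (MulAut G) := by
  refine ResiduallyFinite.of_forall_exists_monoidHom fun φ hφ => ?_
  obtain ⟨H, _, _, f, hf⟩ := hG.exists_comp_ne (inv_ne_one.mpr hφ)
  have := hfg.finite_monoidHom H
  refine ⟨_, inferInstance, inferInstance, MulAut.precompPerm G H, fun hφ1 => hf ?_⟩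
  exact DFunLike.congr_fun hφ1 f
end

section
/- Every finitely generated residually finite group is Hopfian. -/
open Function

namespace MonoidHom

variable {G M : Type*} [Group G] [Monoid M]

instance finite_of_fg [Group.FG G] [Finite M] : Finite (G →* M) := by
  obtain ⟨S, hS⟩ := Group.FG.out (G := G)
  refine Finite.of_injective (fun φ : G →* M => fun s : S => φ s) fun φ ψ h => ?_
  exact eq_of_eqOn_dense hS fun x hx => congrFun h ⟨x, hx⟩

theorem exists_comp_eq_of_surjective [Group.FG G] [Finite M] {f : G →* G}
    (hf : Surjective f) (φ : G →* M) : ∃ ψ : G →* M, ψ.comp f = φ :=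
  Finite.injective_iff_surjective.mp (fun _ _ h => (cancel_right hf).mp h) φ

theorem ker_le_ker_of_surjective [Group.FG G] [Finite M] {f : G →* G}
    (hf : Surjective f) (φ : G →* M) : f.ker ≤ φ.ker := by
  obtain ⟨ψ, rfl⟩ := exists_comp_eq_of_surjective hf φ
  intro x hx
  rw [mem_ker] at hx ⊢
  rw [comp_apply, hx, map_one]

end MonoidHom

/-- A finitely generated residually finite group is Hopfian: every surjective
endomorphism is injective. -/
theorem hopfian_of_fg_residuallyFinite (G : Type*) [Group G] (hfg : Group.FG G)
    (hG : ResiduallyFinite G) (f : G →* G) (hf : Function.Surjective f) :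
    Function.Injective f := by
  refine (injective_iff_map_eq_one f).mpr fun g hg => ?_
  by_contra hg1
  obtain ⟨H, _, _, φ, -, hφg⟩ := hG g hg1
  exact hφg (MonoidHom.ker_le_ker_of_surjective hf φ hg)
end

section
/- The matrices [[1,2],[0,1]] and [[1,0],[2,1]] generate a free subgroup of rank 2 in SL(2,ℤ). -/
/-!
Ping-pong on `R²`: for `n ≠ 0` and `|c| ≥ 2`, the power `[[1, c], [0, 1]] ^ n = [[1, n c], [0, 1]]`
sends every vector with `|x| < |y|` to one with `|x| > |y|`, and `[[1, 0], [c, 1]] ^ n` does the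
reverse. Since the two regions are disjoint and nonempty, a nontrivial reduced word in the two
matrices moves a suitable vector out of its region, so it is not the identity.
-/

/-- The matrix `[[1, 2], [0, 1]]` in `SL(2, ℤ)`. -/
def A : Matrix.SpecialLinearGroup (Fin 2) ℤ := ⟨!![1, 2; 0, 1], by decide⟩

/-- The matrix `[[1, 0], [2, 1]]` in `SL(2, ℤ)`. -/
def B : Matrix.SpecialLinearGroup (Fin 2) ℤ := ⟨!![1, 0; 2, 1], by decide⟩

open Function Matrix Matrix.SpecialLinearGroup Monoid Pointwise

theorem FreeGroup.injective_lift_of_zpow_ping_pong {ι G α : Type*} [Nontrivial ι] [Group G]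
    [MulAction G α] (a : ι → G) (X : ι → Set α) (hX : ∀ i, (X i).Nonempty)
    (hXdisj : Pairwise (Disjoint on X))
    (hpp : Pairwise fun i j => ∀ n : ℤ, n ≠ 0 → a i ^ n • X j ⊆ X i) :
    Injective (FreeGroup.lift a) := by
  -- `FreeGroup ι` is the free product of the infinite cyclic groups `FreeGroup Unit`.
  have hlift : FreeGroup.lift a =
      (CoprodI.lift fun i => FreeGroup.lift fun _ => a i).comp
        freeGroupEquivCoprodI.toMonoidHom := by
    ext; simp
  rw [hlift, MonoidHom.coe_comp]
  refine .comp ?_ freeGroupEquivCoprodI.injective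
  refine CoprodI.lift_injective_of_ping_pong _ (Or.inr ⟨Classical.arbitrary ι, ?_⟩) X hX hXdisj ?_
  · exact Cardinal.ofNat_le_aleph0.trans (Cardinal.aleph0_le_mk _)
  · intro i j hij h hh
    obtain ⟨n, rfl⟩ : ∃ n : ℤ, FreeGroup.of () ^ n = h :=
      ⟨_, FreeGroup.freeGroupUnitEquivInt.left_inv h⟩
    have hn : n ≠ 0 := by
      rintro rfl
      exact hh (zpow_zero _)
    simpa using hpp hij n hn

namespace Matrix.SpecialLinearGroup

variable {ι R : Type*} [Fintype ι] [DecidableEq ι] [CommRing R]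

lemma transvection_zpow {i j : ι} (hij : i ≠ j) (b : R) (n : ℤ) :
    transvection hij b ^ n = transvection hij (n • b) := by
  let f : Multiplicative R →* SpecialLinearGroup ι R :=
    { toFun := fun x => transvection hij x.toAdd
      map_one' := transvection_coeff_zero hij
      map_mul' := fun x y => transvection_add hij x.toAdd y.toAdd }
  exact (map_zpow f (Multiplicative.ofAdd b) n).symm

lemma transvection_smul_apply {i j : ι} (hij : i ≠ j) (b : R) (v : ι → R) (k : ι) :
    (transvection hij b • v) k = v k + if k = i then b * v j else 0 := by
  simp [SpecialLinearGroup.smul_def, transvection_coe, add_mulVec, single_mulVec_eq,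
    Pi.single_apply]

end Matrix.SpecialLinearGroup

def coordDominant {ι : Type*} (R : Type*) [AddGroup R] [LinearOrder R] (i : ι) : Set (ι → R) :=
  {v | ∀ k ≠ i, |v k| < |v i|}

section CoordDominant

variable {ι R : Type*}

lemma single_mem_coordDominant [DecidableEq ι] [Ring R] [LinearOrder R] [IsOrderedRing R]
    [Nontrivial R] (i : ι) : (Pi.single i 1 : ι → R) ∈ coordDominant R i := by
  intro k hk
  simp [hk]

lemma pairwise_disjoint_coordDominant [AddGroup R] [LinearOrder R] :
    Pairwise (Disjoint on (coordDominant (ι := ι) R)) := by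
  intro i j hij
  refine Set.disjoint_left.2 fun v hi hj => ?_
  exact lt_asymm (hi j hij.symm) (hj i hij)

variable [CommRing R] [LinearOrder R] [IsStrictOrderedRing R]

lemma transvection_smul_coordDominant_subset [Fintype ι] [DecidableEq ι] {i j : ι} (hij : i ≠ j)
    {b : R} (hb : 2 ≤ |b|) : transvection hij b • coordDominant R j ⊆ coordDominant R i := by
  rintro _ ⟨v, hv, rfl⟩ k hk
  have hvi := hv i hij
  have hgrow : |v j| < |v i + b * v j| := by
    have := abs_sub (v i + b * v j) (v i)
    rw [add_sub_cancel_left, abs_mul] at this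
    nlinarith [abs_nonneg (v j)]
  simp only [transvection_smul_apply, if_neg hk]
  rcases eq_or_ne k j with rfl | hkj
  · simpa using hgrow
  · simpa using (hv k hkj).trans hgrow

lemma two_le_abs_zsmul {c : R} (hc : 2 ≤ |c|) {n : ℤ} (hn : n ≠ 0) : 2 ≤ |n • c| := by
  have : (1 : R) ≤ |(n : R)| := by exact_mod_cast Int.one_le_abs hn
  rw [zsmul_eq_mul, abs_mul]
  nlinarith

theorem injective_lift_transvections_of_two_le_abs {c₁ c₂ : R} (hc₁ : 2 ≤ |c₁|) (hc₂ : 2 ≤ |c₂|) :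
    Injective (FreeGroup.lift fun b : Bool => if b then transvection (zero_ne_one' (Fin 2)) c₁
      else transvection (one_ne_zero' (Fin 2)) c₂) := by
  refine FreeGroup.injective_lift_of_zpow_ping_pong _
    (fun b => coordDominant R (if b then 0 else 1 : Fin 2))
    (fun _ => ⟨_, single_mem_coordDominant _⟩)
    (pairwise_disjoint_coordDominant.comp_of_injective (by decide)) ?_
  rintro (_ | _) (_ | _) hij n hn <;> simp only [ne_eq, not_true_eq_false] at hij
  · simpa [transvection_zpow] using
      transvection_smul_coordDominant_subset _ (two_le_abs_zsmul hc₂ hn)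
  · simpa [transvection_zpow] using
      transvection_smul_coordDominant_subset _ (two_le_abs_zsmul hc₁ hn)

end CoordDominant

/-- The matrices `[[1,2],[0,1]]` and `[[1,0],[2,1]]` generate a free subgroup of rank 2
in `SL(2, ℤ)`: the homomorphism from the free group of rank 2 sending the two
generators to these matrices is injective. -/
theorem free_subgroup_SL2Z :
    Function.Injective (FreeGroup.lift (fun b : Bool => if b then A else B)) := by
  have hA : A = transvection (zero_ne_one' (Fin 2)) 2 := by
    ext i j; fin_cases i <;> fin_cases j <;> rfl
  have hB : B = transvection (one_ne_zero' (Fin 2)) 2 := by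
    ext i j; fin_cases i <;> fin_cases j <;> rfl
  simpa only [hA, hB] using injective_lift_transvections_of_two_le_abs (R := ℤ) (by norm_num)
    (by norm_num)
end

section
/- If R is a (nonzero) ring without zero divisors and G is a right-orderable group, then the group ring R[G] has no zero divisors. -/
/-!
A right-invariant total order on a left-cancellative `G` gives it unique products: for finite
nonempty `A, B ⊆ G`, the maximum of `A * B` is attained by exactly one pair `(a, b) ∈ A × B`.
Taking `A, B` to be the supports of `a, b ∈ R[G]`, the coefficient of `a * b` at that maximum is
the single product of two nonzero coefficients of `a` and `b`, hence nonzero when `R` has no zero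
divisors.
-/

theorem UniqueProds.of_rightInvariant_strictTotalOrder {G : Type*} [Mul G] [IsLeftCancelMul G]
    {lt : G → G → Prop} (hsto : IsStrictTotalOrder G lt)
    (hright : ∀ x y z : G, lt x y → lt (x * z) (y * z)) :
    UniqueProds G := by
  classical
  let : LinearOrder G := linearOrderOfSTO lt
  have : MulRightStrictMono G := ⟨fun z _ _ h ↦ hright _ _ z h⟩
  infer_instance

theorem groupRing_no_zero_divisors_of_rightOrderable_general
    (R : Type*) [Ring R]
    (hR : ∀ a b : R, a * b = 0 → a = 0 ∨ b = 0)
    (G : Type*) [Group G]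
    (lt : G → G → Prop) (hsto : IsStrictTotalOrder G lt)
    (hright : ∀ x y z : G, lt x y → lt (x * z) (y * z))
    (a b : MonoidAlgebra R G) (hab : a * b = 0) :
    a = 0 ∨ b = 0 := by
  have := UniqueProds.of_rightInvariant_strictTotalOrder hsto hright
  have : NoZeroDivisors R := ⟨hR _ _⟩
  exact mul_eq_zero.mp hab

/-- If `R` is a nonzero ring without zero divisors and `G` is a right-orderable group,
then the group ring `R[G]` has no zero divisors. -/
theorem groupRing_no_zero_divisors_of_rightOrderable
    (R : Type*) [Ring R] [Nontrivial R]
    (hR : ∀ a b : R, a * b = 0 → a = 0 ∨ b = 0)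
    (G : Type*) [Group G]
    (lt : G → G → Prop) (hsto : IsStrictTotalOrder G lt)
    (hright : ∀ x y z : G, lt x y → lt (x * z) (y * z))
    (a b : MonoidAlgebra R G) (hab : a * b = 0) :
    a = 0 ∨ b = 0 :=
  groupRing_no_zero_divisors_of_rightOrderable_general R hR G lt hsto hright a b hab
end

section
/- If R is a ring without zero divisors and G is a right-orderable group, then every unit of the group ring R[G] is of the form r·g with r a unit of R and g ∈ G. -/
/-!
A right order on `G` gives it the two-unique-products property: for finite `A, B ⊆ G` with
`#A * #B > 1` there are two distinct pairs `(a, b) ∈ A × B` each of which is the only way of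
writing its product `a * b`. Over a ring without zero divisors the coefficient of such a product
in `f * g` is a product of nonzero coefficients, hence nonzero. So if `f * g = 1`, whose support
is `{1}`, the supports of `f` and `g` cannot have more than one element between them: both
`f` and `g` are monomials, and their coefficients are mutually inverse.
-/

open Finset

theorem TwoUniqueProds.of_rightInvariant_isStrictTotalOrder {G : Type*} [Mul G]
    [IsLeftCancelMul G] (lt : G → G → Prop) [IsStrictTotalOrder G lt]
    (hright : ∀ x y z : G, lt x y → lt (x * z) (y * z)) : TwoUniqueProds G := by
  classical
  let : LinearOrder G := linearOrderOfSTO lt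
  have : MulRightStrictMono G := ⟨fun z x y h ↦ hright x y z h⟩
  exact TwoUniqueProds.of_covariant_left

namespace MonoidAlgebra

variable {R G : Type*} [Semiring R]

theorem card_support_mul_card_support_le_one [NoZeroDivisors R] [Mul G] [TwoUniqueProds G]
    {f g : R[G]} (h : #(f * g).coeff.support ≤ 1) :
    #f.coeff.support * #g.coeff.support ≤ 1 := by
  by_contra! hcard
  obtain ⟨p, hp, q, hq, hne, hpu, hqu⟩ := TwoUniqueProds.uniqueMul_of_one_lt_card hcard
  rw [mem_product] at hp hq
  have mem_support {x : G × G} (hx : x.1 ∈ f.coeff.support ∧ x.2 ∈ g.coeff.support)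
      (hxu : UniqueMul f.coeff.support g.coeff.support x.1 x.2) :
      x.1 * x.2 ∈ (f * g).coeff.support := by
    rw [Finsupp.mem_support_iff, coeff_mul_mul_of_uniqueMul hxu]
    exact mul_ne_zero (Finsupp.mem_support_iff.mp hx.1) (Finsupp.mem_support_iff.mp hx.2)
  have hprod : q.1 * q.2 = p.1 * p.2 :=
    card_le_one.mp h _ (mem_support hq hqu) _ (mem_support hp hpu)
  obtain ⟨h1, h2⟩ := hpu hq.1 hq.2 hprod
  exact hne (Prod.ext h1 h2).symm

theorem exists_eq_single_of_mul_eq_one [NoZeroDivisors R] [Nontrivial R] [Monoid G]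
    [TwoUniqueProds G] {f g : R[G]} (h : f * g = 1) : ∃ a r, f = single a r := by
  have hg : g.coeff.support.Nonempty := by
    rw [Finsupp.support_nonempty_iff, Ne, coeff_eq_zero]
    rintro rfl
    exact one_ne_zero (h.symm.trans (mul_zero f))
  have hfg : #f.coeff.support * #g.coeff.support ≤ 1 := by
    refine card_support_mul_card_support_le_one ?_
    rw [h, one_def, coeff_single]
    exact card_le_one_iff_subset_singleton.mpr ⟨1, Finsupp.support_single_subset⟩
  have hf : #f.coeff.support ≤ 1 := le_of_mul_le_of_one_le_left hfg hg.card_pos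
  obtain ⟨a, r, hfar⟩ := Finsupp.card_support_le_one'.mp hf
  exact ⟨a, r, coeff_injective hfar⟩

theorem mul_eq_one_of_single_mul_single_eq_one [Nontrivial R] [MulOneClass G] {a b : G}
    {r s : R} (h : single a r * single b s = 1) : r * s = 1 := by
  rw [single_mul_single, one_def, single_inj] at h
  exact h.elim And.right fun h ↦ absurd h.2 one_ne_zero

theorem exists_unit_eq_single [NoZeroDivisors R] [Monoid G] [TwoUniqueProds G] (u : R[G]ˣ) :
    ∃ (r : Rˣ) (g : G), (u : R[G]) = single g (r : R) := by
  cases subsingleton_or_nontrivial R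
  · exact ⟨1, 1, Subsingleton.elim _ _⟩
  obtain ⟨a, r, hu⟩ := exists_eq_single_of_mul_eq_one u.mul_inv
  obtain ⟨b, s, hv⟩ := exists_eq_single_of_mul_eq_one u.inv_mul
  have hrs := mul_eq_one_of_single_mul_single_eq_one (hu ▸ hv ▸ u.mul_inv)
  have hsr := mul_eq_one_of_single_mul_single_eq_one (hv ▸ hu ▸ u.inv_mul)
  exact ⟨⟨r, s, hrs, hsr⟩, a, hu⟩

end MonoidAlgebra

/-- If `R` is a ring without zero divisors and `G` is a right-orderable group, then the
only units of the group ring `R[G]` are the monomials `r · g` with `r` a unit of `R`. -/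
theorem groupRing_units_are_monomials_of_rightOrderable
    (R : Type*) [Ring R]
    (hR : ∀ a b : R, a * b = 0 → a = 0 ∨ b = 0)
    (G : Type*) [Group G]
    (lt : G → G → Prop) (hsto : IsStrictTotalOrder G lt)
    (hright : ∀ x y z : G, lt x y → lt (x * z) (y * z))
    (u : (MonoidAlgebra R G)ˣ) :
    ∃ (r : Rˣ) (g : G), (u : MonoidAlgebra R G) = MonoidAlgebra.single g (r : R) := by
  have : NoZeroDivisors R := ⟨hR _ _⟩
  have : TwoUniqueProds G := TwoUniqueProds.of_rightInvariant_isStrictTotalOrder lt hright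
  exact MonoidAlgebra.exists_unit_eq_single u
end

section
/- If a group G acts effectively on ℝ by order-preserving homeomorphisms, then G is right-orderable. -/
/-!
Fix a well-ordering of `ℝ` and compare two group elements through the lexicographic order of
the functions `ℝ → ℝ` by which their inverses act. Faithfulness makes this a strict total order
on the group, and since `(x * z)⁻¹` acts as `z⁻¹` post-composed with `x⁻¹`, right multiplication
by `z` post-composes both functions with the strictly increasing map `z⁻¹`, which preserves the
lexicographic order.
-/

open Function

theorem Pi.isStrictTotalOrder_lex {ι β : Type*} [LinearOrder β] (r : ι → ι → Prop)
    [IsWellOrder ι r] : IsStrictTotalOrder (ι → β) (Pi.Lex r (· < ·)) := by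
  classical
  let _ : LinearOrder ι := linearOrderOfSTO r
  have : WellFoundedLT ι := ⟨IsWellFounded.wf (r := r)⟩
  exact inferInstanceAs (IsStrictTotalOrder (Lex (ι → β)) (· < ·))

theorem StrictMono.piLex_comp {ι β γ : Type*} [Preorder β] [Preorder γ] {r : ι → ι → Prop}
    {f : β → γ} (hf : StrictMono f) {x y : ι → β} (h : Pi.Lex r (· < ·) x y) :
    Pi.Lex r (· < ·) (f ∘ x) (f ∘ y) :=
  let ⟨i, heq, hlt⟩ := h
  ⟨i, fun j hj => congrArg f (heq j hj), hf hlt⟩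

theorem exists_rightInvariant_strictTotalOrder_of_faithful_strictMono {G α : Type*} [Group G]
    [LinearOrder α] (a : G →* Equiv.Perm α) (hmono : ∀ g : G, StrictMono ⇑(a g))
    (heff : Injective a) :
    ∃ lt : G → G → Prop, IsStrictTotalOrder G lt ∧ ∀ x y z : G, lt x y → lt (x * z) (y * z) := by
  let φ : G → α → α := fun g => ⇑(a g⁻¹)
  have hφ : Injective φ := fun x y h =>
    inv_injective (heff (Equiv.coe_fn_injective h))
  have hφ_mul (x z : G) : φ (x * z) = ⇑(a z⁻¹) ∘ φ x := by
    simp only [φ, mul_inv_rev, map_mul, Equiv.Perm.coe_mul]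
  have := Pi.isStrictTotalOrder_lex (β := α) (WellOrderingRel (α := α))
  refine ⟨Pi.Lex WellOrderingRel (· < ·) on φ, hφ.isStrictTotalOrder_onFun _, ?_⟩
  intro x y z h
  simp only [onFun, hφ_mul]
  exact (hmono z⁻¹).piLex_comp h

/-- If a group `G` acts effectively on `ℝ` by order-preserving homeomorphisms
(i.e. strictly increasing bijections), then `G` is right-orderable. -/
theorem rightOrderable_of_effective_action_on_real
    (G : Type*) [Group G] (a : G →* Equiv.Perm ℝ)
    (hmono : ∀ g : G, StrictMono ⇑(a g))
    (heff : Function.Injective a) :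
    ∃ lt : G → G → Prop, IsStrictTotalOrder G lt ∧
      ∀ x y z : G, lt x y → lt (x * z) (y * z) :=
  exists_rightInvariant_strictTotalOrder_of_faithful_strictMono a hmono heff
end

section
/- The Magnus map μ from the free group F on generators x₁,…,xₙ into the ring ℤ[[X₁,…,Xₙ]] of formal power series in non-commuting variables, defined by μ(xᵢ) = 1 + Xᵢ and μ(xᵢ⁻¹) = 1 − Xᵢ + Xᵢ² − ⋯, is an injective group homomorphism into the group of power series with constant term 1. -/
/-- The ring `ℤ[[X₁, …, Xₙ]]` of formal power series in `n` non-commuting variables: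
a series is a `ℤ`-valued function on monomials, i.e. on words in the `n` variables. -/
def NCSeries (n : ℕ) : Type := List (Fin n) → ℤ

namespace NCSeries

/-- The coefficient of the monomial (word) `w` in the series `f`. -/
def coeff {n : ℕ} (f : NCSeries n) (w : List (Fin n)) : ℤ := f w

instance instZero (n : ℕ) : Zero (NCSeries n) := ⟨fun _ => 0⟩

instance instOne (n : ℕ) : One (NCSeries n) := ⟨fun w => if w = [] then 1 else 0⟩

instance instAdd (n : ℕ) : Add (NCSeries n) := ⟨fun f g => fun w => f w + g w⟩

instance instNeg (n : ℕ) : Neg (NCSeries n) := ⟨fun f => fun w => -f w⟩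

/-- Convolution (Cauchy) product: sum over all splittings of a monomial. -/
instance instMul (n : ℕ) : Mul (NCSeries n) :=
  ⟨fun f g => fun w =>
    ∑ i ∈ Finset.range (w.length + 1), f (w.take i) * g (w.drop i)⟩

/-- Ring structure on non-commutative power series. -/
instance instRing (n : ℕ) : Ring (NCSeries n) where
  add_assoc f g h := funext fun _ => add_assoc _ _ _
  zero_add f := funext fun _ => zero_add _
  add_zero f := funext fun _ => add_zero _
  add_comm f g := funext fun _ => add_comm _ _
  neg_add_cancel f := funext fun _ => neg_add_cancel _
  nsmul := nsmulRec
  zsmul := zsmulRec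
  mul_assoc f g h := funext fun w => by
    show (∑ j ∈ Finset.range (w.length + 1),
        (∑ i ∈ Finset.range ((w.take j).length + 1),
          f ((w.take j).take i) * g ((w.take j).drop i)) * h (w.drop j))
      = ∑ i ∈ Finset.range (w.length + 1),
          f (w.take i) * ∑ k ∈ Finset.range ((w.drop i).length + 1),
            g ((w.drop i).take k) * h ((w.drop i).drop k)
    have L1 : (∑ j ∈ Finset.range (w.length + 1),
        (∑ i ∈ Finset.range ((w.take j).length + 1),
          f ((w.take j).take i) * g ((w.take j).drop i)) * h (w.drop j))
        = ∑ j ∈ Finset.range (w.length + 1), ∑ i ∈ Finset.range (j + 1),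
            f (w.take i) * g ((w.drop i).take (j - i)) * h (w.drop j) := by
      refine Finset.sum_congr rfl fun j hj => ?_
      simp only [Finset.mem_range, Nat.lt_succ_iff] at hj
      rw [Finset.sum_mul, List.length_take, Nat.min_eq_left hj]
      refine Finset.sum_congr rfl fun i hi => ?_
      simp only [Finset.mem_range, Nat.lt_succ_iff] at hi
      rw [List.take_take, Nat.min_eq_left hi, List.drop_take]
    have R1 : (∑ i ∈ Finset.range (w.length + 1),
        f (w.take i) * ∑ k ∈ Finset.range ((w.drop i).length + 1),
          g ((w.drop i).take k) * h ((w.drop i).drop k))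
        = ∑ i ∈ Finset.range (w.length + 1), ∑ k ∈ Finset.range (w.length - i + 1),
            f (w.take i) * g ((w.drop i).take k) * h (w.drop (i + k)) := by
      refine Finset.sum_congr rfl fun i hi => ?_
      rw [Finset.mul_sum, List.length_drop]
      refine Finset.sum_congr rfl fun k hk => ?_
      rw [List.drop_drop, mul_assoc]
    rw [L1, R1, Finset.sum_sigma', Finset.sum_sigma']
    refine Finset.sum_nbij' (fun p => ⟨p.2, p.1 - p.2⟩) (fun q => ⟨q.1 + q.2, q.1⟩)
      ?_ ?_ ?_ ?_ ?_
    · rintro ⟨j, i⟩ hp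
      simp only [Finset.mem_sigma, Finset.mem_range, Nat.lt_succ_iff] at hp ⊢
      omega
    · rintro ⟨i, k⟩ hq
      simp only [Finset.mem_sigma, Finset.mem_range, Nat.lt_succ_iff] at hq ⊢
      omega
    · rintro ⟨j, i⟩ hp
      simp only [Finset.mem_sigma, Finset.mem_range, Nat.lt_succ_iff] at hp
      have h1 : i + (j - i) = j := by omega
      simp [h1]
    · rintro ⟨i, k⟩ hq
      simp only [Finset.mem_sigma, Finset.mem_range, Nat.lt_succ_iff] at hq
      have h1 : i + k - i = k := by omega
      simp [h1]
    · rintro ⟨j, i⟩ hp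
      simp only [Finset.mem_sigma, Finset.mem_range, Nat.lt_succ_iff] at hp
      have : i + (j - i) = j := by omega
      simp [this]
  one_mul f := funext fun w => by
    show (∑ i ∈ Finset.range (w.length + 1),
        (if w.take i = [] then (1 : ℤ) else 0) * f (w.drop i)) = f w
    rw [Finset.sum_eq_single 0]
    · simp
    · intro b hb hb0
      simp only [Finset.mem_range, Nat.lt_succ_iff] at hb
      have hne : ¬w.take b = [] := by
        rw [List.take_eq_nil_iff]
        rintro (rfl | rfl)
        · exact hb0 rfl
        · exact hb0 (Nat.le_zero.mp hb)
      simp [hne]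
    · simp
  mul_one f := funext fun w => by
    show (∑ i ∈ Finset.range (w.length + 1),
        f (w.take i) * (if w.drop i = [] then (1 : ℤ) else 0)) = f w
    rw [Finset.sum_eq_single w.length] <;>
      simp +contextual [List.drop_eq_nil_iff, Nat.lt_succ_iff]
    omega
  left_distrib f g h := funext fun w => by
    show (∑ i ∈ Finset.range (w.length + 1),
        f (w.take i) * (g (w.drop i) + h (w.drop i))) = _
    simp only [mul_add]
    exact Finset.sum_add_distrib
  right_distrib f g h := funext fun w => by
    show (∑ i ∈ Finset.range (w.length + 1),
        (f (w.take i) + g (w.take i)) * h (w.drop i)) = _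
    simp only [add_mul]
    exact Finset.sum_add_distrib
  zero_mul f := funext fun w => by
    show (∑ i ∈ Finset.range (w.length + 1), (0 : ℤ) * f (w.drop i)) = 0
    simp
  mul_zero f := funext fun w => by
    show (∑ i ∈ Finset.range (w.length + 1), f (w.take i) * (0 : ℤ)) = 0
    simp

/-- The variable `Xᵢ`, as a power series. -/
def X {n : ℕ} (i : Fin n) : NCSeries n := fun w => if w = [i] then 1 else 0

/-- The geometric series `1 - Xᵢ + Xᵢ² - Xᵢ³ + ⋯`, inverse of `1 + Xᵢ`. -/
def geom {n : ℕ} (i : Fin n) : NCSeries n :=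
  fun w => if w.all (· = i) then (-1) ^ w.length else 0

/-- `1 + Xᵢ` as a unit of `ℤ[[X₁, …, Xₙ]]`, with inverse `1 - Xᵢ + Xᵢ² - ⋯`. -/
def magnusUnit {n : ℕ} (i : Fin n) : (NCSeries n)ˣ where
  val := 1 + X i
  inv := geom i
  val_inv := funext fun w => by
    show (∑ k ∈ Finset.range (w.length + 1),
        ((if w.take k = [] then (1 : ℤ) else 0) + (if w.take k = [i] then 1 else 0)) *
          (if (w.drop k).all (· = i) then (-1) ^ (w.drop k).length else 0))
      = if w = [] then 1 else 0
    simp only [add_mul]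
    rw [Finset.sum_add_distrib]
    have hA : (∑ k ∈ Finset.range (w.length + 1),
        (if w.take k = [] then (1 : ℤ) else 0) *
          (if (w.drop k).all (· = i) then (-1) ^ (w.drop k).length else 0))
        = if w.all (· = i) then (-1) ^ w.length else 0 := by
      rw [Finset.sum_eq_single 0]
      · simp
      · intro b hb hb0
        simp only [Finset.mem_range, Nat.lt_succ_iff] at hb
        have hne : ¬w.take b = [] := by
          rw [List.take_eq_nil_iff]
          rintro (rfl | rfl)
          · exact hb0 rfl
          · exact hb0 (Nat.le_zero.mp hb)
        simp [hne]
      · simp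
    rw [hA]
    cases w with
    | nil => simp
    | cons a t =>
      have hB : (∑ k ∈ Finset.range ((a :: t).length + 1),
          (if (a :: t).take k = [i] then (1 : ℤ) else 0) *
            (if ((a :: t).drop k).all (· = i) then (-1) ^ ((a :: t).drop k).length else 0))
          = (if a = i then (1 : ℤ) else 0) *
              (if t.all (· = i) then (-1) ^ t.length else 0) := by
        rw [Finset.sum_eq_single 1]
        · simp only [List.take_succ_cons, List.take_zero, List.drop_succ_cons,
            List.drop_zero]
          congr 1
          by_cases ha : a = i <;> simp [ha]
        · intro b hb hb1
          simp only [Finset.mem_range, Nat.lt_succ_iff] at hb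
          have hne : ¬(a :: t).take b = [i] := by
            intro hEq
            have : ((a :: t).take b).length = 1 := by rw [hEq]; rfl
            rw [List.length_take] at this
            omega
          simp [hne]
        · simp
      rw [hB]
      by_cases ha : a = i <;> by_cases ht : t.all (· = i) <;>
        simp [ha, ht, List.all_cons, pow_succ]
  inv_val := funext fun w => by
    show (∑ k ∈ Finset.range (w.length + 1),
        (if (w.take k).all (· = i) then (-1 : ℤ) ^ (w.take k).length else 0) *
          ((if w.drop k = [] then (1 : ℤ) else 0) + (if w.drop k = [i] then 1 else 0)))
      = if w = [] then 1 else 0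
    simp only [mul_add]
    rw [Finset.sum_add_distrib]
    have hA : (∑ k ∈ Finset.range (w.length + 1),
        (if (w.take k).all (· = i) then (-1 : ℤ) ^ (w.take k).length else 0) *
          (if w.drop k = [] then (1 : ℤ) else 0))
        = if w.all (· = i) then (-1) ^ w.length else 0 := by
      rw [Finset.sum_eq_single w.length]
      · simp
      · intro b hb hb0
        simp only [Finset.mem_range, Nat.lt_succ_iff] at hb
        have hne : ¬w.drop b = [] := by
          rw [List.drop_eq_nil_iff]
          omega
        simp [hne]
      · simp
    rw [hA]
    induction w using List.reverseRecOn with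
    | nil => simp
    | append_singleton u a _ =>
      have hB : (∑ k ∈ Finset.range ((u ++ [a]).length + 1),
          (if ((u ++ [a]).take k).all (· = i) then (-1 : ℤ) ^ ((u ++ [a]).take k).length
            else 0) *
            (if (u ++ [a]).drop k = [i] then (1 : ℤ) else 0))
          = (if u.all (· = i) then (-1 : ℤ) ^ u.length else 0) *
              (if a = i then (1 : ℤ) else 0) := by
        rw [Finset.sum_eq_single u.length]
        · rw [List.take_left, List.drop_left]
          congr 1
          by_cases ha : a = i <;> simp [ha]
        · intro b hb hb1
          simp only [Finset.mem_range, Nat.lt_succ_iff] at hb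
          have hne : ¬(u ++ [a]).drop b = [i] := by
            intro hEq
            have : ((u ++ [a]).drop b).length = 1 := by rw [hEq]; rfl
            rw [List.length_drop, List.length_append] at this
            simp only [List.length_singleton] at this
            simp only [List.length_append, List.length_singleton] at hb
            omega
          simp [hne]
        · intro h
          exact absurd (Finset.mem_range.mpr (by simp)) h
      rw [hB]
      by_cases ha : a = i <;> by_cases hu : u.all (· = i) <;>
        simp [ha, hu, List.all_append, pow_succ]

/-- The Magnus map `μ : Fₙ → ℤ[[X₁, …, Xₙ]]`, the group homomorphism determined by
`μ(xᵢ) = 1 + Xᵢ` (so `μ(xᵢ⁻¹) = 1 - Xᵢ + Xᵢ² - ⋯`), valued in the units of the ring. -/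
def magnus (n : ℕ) : FreeGroup (Fin n) →* (NCSeries n)ˣ :=
  FreeGroup.lift magnusUnit

end NCSeries

/-!
Every element of a free group is a product of syllables `x_{i₁}^{e₁} ⋯ x_{i_k}^{e_k}` with
consecutive indices distinct and all `e_j ≠ 0`. The series `μ(xᵢ)^e` involves only `Xᵢ` and equals
`1 + e Xᵢ + O(Xᵢ²)`, so the only splitting of the monomial `X_{i₁} ⋯ X_{i_k}` that contributes to
its coefficient in `μ` of that product takes one letter from each factor, and the coefficient is
`e₁ ⋯ e_k ≠ 0`. Hence `μ(g) = 1` forces `k = 0`, i.e. `g = 1`.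
-/

section Syllables

variable {α G : Type*} [Group G]

def IsReducedSyllables (l : List (α × ℤ)) : Prop :=
  (l.map Prod.fst).IsChain (· ≠ ·) ∧ ∀ p ∈ l, p.2 ≠ 0

lemma IsReducedSyllables.exists_zpow_mul (f : α → G) {l : List (α × ℤ)}
    (hl : IsReducedSyllables l) (x : α) (s : ℤ) :
    ∃ l', IsReducedSyllables l' ∧ (l'.map fun p => f p.1 ^ p.2).prod
      = f x ^ s * (l.map fun p => f p.1 ^ p.2).prod := by
  obtain ⟨hchain, hne⟩ := hl
  by_cases hs : s = 0
  · exact ⟨l, ⟨hchain, hne⟩, by simp [hs]⟩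
  cases l with
  | nil => exact ⟨[(x, s)], ⟨List.isChain_singleton _, by simpa using hs⟩, by simp⟩
  | cons p r =>
    obtain ⟨j, e⟩ := p
    by_cases hxj : x = j
    · subst hxj
      have hr : IsReducedSyllables r :=
        ⟨(hchain : (x :: r.map Prod.fst).IsChain _).tail, fun p hp => hne p (by simp [hp])⟩
      by_cases hse : s + e = 0
      · refine ⟨r, hr, ?_⟩
        rw [List.map_cons, List.prod_cons, ← mul_assoc, ← zpow_add, hse, zpow_zero, one_mul]
      · refine ⟨(x, s + e) :: r, ⟨hchain, ?_⟩, ?_⟩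
        · simpa [hse] using hr.2
        · simp [zpow_add, mul_assoc]
    · refine ⟨(x, s) :: (j, e) :: r, ⟨?_, ?_⟩, by simp⟩
      · simpa [hxj] using hchain
      · simpa [hs] using hne

lemma Subgroup.exists_isReducedSyllables_of_mem_closure (f : α → G) {g : G}
    (hg : g ∈ Subgroup.closure (Set.range f)) :
    ∃ l, IsReducedSyllables l ∧ (l.map fun p => f p.1 ^ p.2).prod = g := by
  induction hg using Subgroup.closure_induction_left with
  | one => exact ⟨[], ⟨List.isChain_nil, by simp⟩, rfl⟩
  | mul_left _ hx _ _ ih =>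
    obtain ⟨x, rfl⟩ := hx
    obtain ⟨l, hl, rfl⟩ := ih
    simpa using hl.exists_zpow_mul f x 1
  | inv_mul_cancel _ hx _ _ ih =>
    obtain ⟨x, rfl⟩ := hx
    obtain ⟨l, hl, rfl⟩ := ih
    simpa using hl.exists_zpow_mul f x (-1)

lemma FreeGroup.exists_isReducedSyllables (g : FreeGroup α) :
    ∃ l, IsReducedSyllables l ∧ (l.map fun p => FreeGroup.of p.1 ^ p.2).prod = g :=
  Subgroup.exists_isReducedSyllables_of_mem_closure _ (by simp)

end Syllables

namespace NCSeries

variable {n : ℕ}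

lemma add_apply (f g : NCSeries n) (w : List (Fin n)) : (f + g) w = f w + g w := rfl

lemma mul_apply (f g : NCSeries n) (w : List (Fin n)) :
    (f * g) w = ∑ k ∈ Finset.range (w.length + 1), f (w.take k) * g (w.drop k) := rfl

lemma one_apply (w : List (Fin n)) : (1 : NCSeries n) w = if w = [] then 1 else 0 := rfl

lemma mul_apply_nil (f g : NCSeries n) : (f * g) [] = f [] * g [] := by
  simp [mul_apply]

lemma mul_apply_singleton (f g : NCSeries n) (a : Fin n) :
    (f * g) [a] = f [] * g [a] + f [a] * g [] := by
  simp [mul_apply, Finset.sum_range_succ]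

def constantCoeff : NCSeries n →* ℤ where
  toFun f := f []
  map_one' := rfl
  map_mul' := mul_apply_nil

lemma val_magnusUnit (i : Fin n) : (magnusUnit i : NCSeries n) = 1 + X i := rfl

lemma val_inv_magnusUnit (i : Fin n) : ((magnusUnit i)⁻¹ : (NCSeries n)ˣ) = geom i := rfl

lemma magnus_of (i : Fin n) : magnus n (FreeGroup.of i) = magnusUnit i :=
  FreeGroup.lift_apply_of

lemma magnus_apply_nil (g : FreeGroup (Fin n)) : (magnus n g : NCSeries n) [] = 1 := by
  have h : (Units.map constantCoeff).comp (magnus n) = 1 :=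
    FreeGroup.ext_hom _ _ fun i => Units.ext (by simp [constantCoeff, magnus_of, val_magnusUnit,
      add_apply, one_apply, X])
  exact congrArg Units.val (DFunLike.congr_fun h g)

lemma magnusUnit_zpow_apply_nil (i : Fin n) (e : ℤ) :
    ((magnusUnit i ^ e : (NCSeries n)ˣ) : NCSeries n) [] = 1 := by
  simpa [magnus_of] using magnus_apply_nil (FreeGroup.of i ^ e)

lemma magnusUnit_zpow_apply_singleton (i : Fin n) (e : ℤ) :
    ((magnusUnit i ^ e : (NCSeries n)ˣ) : NCSeries n) [i] = e := by
  induction e using Int.induction_on with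
  | zero => rfl
  | succ m ih =>
    rw [zpow_add_one, Units.val_mul, mul_apply_singleton, ih, magnusUnit_zpow_apply_nil]
    simp [val_magnusUnit, add_apply, one_apply, X, add_comm]
  | pred m ih =>
    rw [zpow_sub_one, Units.val_mul, mul_apply_singleton, ih, magnusUnit_zpow_apply_nil]
    simp [val_inv_magnusUnit, geom, sub_eq_add_neg, add_comm]

def univariate (i : Fin n) : Submonoid (NCSeries n) where
  carrier := {f | ∀ w, f w ≠ 0 → ∀ a ∈ w, a = i}
  one_mem' w hw := by
    rw [one_apply, ite_ne_right_iff] at hw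
    simp [hw.1]
  mul_mem' {f g} hf hg w hw a ha := by
    obtain ⟨k, -, hk⟩ := Finset.exists_ne_zero_of_sum_ne_zero hw
    rw [← List.take_append_drop k w, List.mem_append] at ha
    exact ha.elim (hf _ (left_ne_zero_of_mul hk) a) (hg _ (right_ne_zero_of_mul hk) a)

lemma magnusUnit_zpow_mem_univariate (i : Fin n) (e : ℤ) :
    ((magnusUnit i ^ e : (NCSeries n)ˣ) : NCSeries n) ∈ univariate i := by
  refine (univariate i).val_mem_of_mem_units
    (zpow_mem ((univariate i).mem_units_of_val_mem_inv_val_mem ?_ ?_) e)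
  · intro w hw a ha
    rw [val_magnusUnit, add_apply, one_apply, X] at hw
    split_ifs at hw <;> simp_all
  · intro w hw a ha
    rw [val_inv_magnusUnit, geom] at hw
    split_ifs at hw with h
    · simpa using List.all_eq_true.mp h a ha
    · exact absurd rfl hw

lemma apply_eq_zero_of_mem_univariate {i : Fin n} {f : NCSeries n} (hf : f ∈ univariate i)
    {w : List (Fin n)} (hw : w.IsChain (· ≠ ·)) (hlen : 2 ≤ w.length) : f w = 0 := by
  by_contra h
  match w, hw with
  | a :: b :: _, hw => exact (List.isChain_cons_cons.mp hw).1 ((hf _ h a (by simp)).trans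
      (hf _ h b (by simp)).symm)

lemma list_prod_apply_eq_zero {fs : List (NCSeries n)} (hfs : ∀ f ∈ fs, ∃ i, f ∈ univariate i)
    {w : List (Fin n)} (hw : w.IsChain (· ≠ ·)) (hlen : fs.length < w.length) :
    fs.prod w = 0 := by
  induction fs generalizing w with
  | nil => simp [one_apply, List.ne_nil_of_length_pos (by simpa using hlen)]
  | cons f fs ih =>
    obtain ⟨i, hf⟩ := hfs f (by simp)
    rw [List.prod_cons, mul_apply]
    refine Finset.sum_eq_zero fun k hk => ?_
    rw [Finset.mem_range] at hk
    by_cases h2 : 2 ≤ k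
    · rw [apply_eq_zero_of_mem_univariate hf (hw.take k) (by simp; omega), zero_mul]
    · rw [ih (fun g hg => hfs g (by simp [hg])) (hw.drop k) (by simp at hlen ⊢; omega), mul_zero]

lemma mul_apply_cons_of_mem_univariate {i : Fin n} {u : NCSeries n} (hu : u ∈ univariate i)
    (P : NCSeries n) {w : List (Fin n)} (hw : (i :: w).IsChain (· ≠ ·)) :
    (u * P) (i :: w) = u [] * P (i :: w) + u [i] * P w := by
  have hfar : ∀ k ∈ Finset.range w.length,
      u ((i :: w).take (k + 2)) * P ((i :: w).drop (k + 2)) = 0 := fun k hk => by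
    rw [apply_eq_zero_of_mem_univariate hu (hw.take _) (by simp at hk ⊢; omega), zero_mul]
  rw [mul_apply, List.length_cons, Finset.sum_range_succ', Finset.sum_range_succ',
    Finset.sum_eq_zero hfar]
  simp [add_comm]

lemma list_prod_apply_syllables {l : List (Fin n × ℤ)} (hl : (l.map Prod.fst).IsChain (· ≠ ·)) :
    (l.map fun p => ((magnusUnit p.1 ^ p.2 : (NCSeries n)ˣ) : NCSeries n)).prod (l.map Prod.fst)
      = (l.map Prod.snd).prod := by
  induction l with
  | nil => rfl
  | cons p t ih =>
    obtain ⟨i, e⟩ := p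
    simp only [List.map_cons, List.prod_cons] at hl ⊢
    have hshort : (t.map fun p => ((magnusUnit p.1 ^ p.2 : (NCSeries n)ˣ) : NCSeries n)).prod
        (i :: t.map Prod.fst) = 0 := by
      refine list_prod_apply_eq_zero (fun f hf => ?_) hl (by simp)
      obtain ⟨p, -, rfl⟩ := List.mem_map.mp hf
      exact ⟨p.1, magnusUnit_zpow_mem_univariate _ _⟩
    rw [mul_apply_cons_of_mem_univariate (magnusUnit_zpow_mem_univariate i e) _ hl, hshort,
      magnusUnit_zpow_apply_singleton, ih hl.tail, mul_zero, zero_add]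

lemma val_magnus_list_prod (l : List (Fin n × ℤ)) :
    (magnus n (l.map fun p => FreeGroup.of p.1 ^ p.2).prod : NCSeries n)
      = (l.map fun p => ((magnusUnit p.1 ^ p.2 : (NCSeries n)ˣ) : NCSeries n)).prod := by
  induction l with
  | nil => rfl
  | cons p l ih => rw [List.map_cons, List.prod_cons, map_mul, Units.val_mul, ih, map_zpow,
      magnus_of, List.map_cons, List.prod_cons]

end NCSeries

/-- The Magnus map is an injective group homomorphism from the free group into the
multiplicative group `{1 + O(1)}` of power series with constant term `1`. -/
theorem magnus_injective_and_constantCoeff_one (n : ℕ) :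
    Function.Injective (NCSeries.magnus n) ∧
    ∀ f : FreeGroup (Fin n),
      NCSeries.coeff ((NCSeries.magnus n f : (NCSeries n)ˣ) : NCSeries n) [] = 1 := by
  refine ⟨(injective_iff_map_eq_one _).mpr fun g hg => ?_, NCSeries.magnus_apply_nil⟩
  obtain ⟨l, ⟨hchain, hne⟩, rfl⟩ := FreeGroup.exists_isReducedSyllables g
  have hcoeff := NCSeries.list_prod_apply_syllables hchain
  rw [← NCSeries.val_magnus_list_prod, hg, Units.val_one, NCSeries.one_apply] at hcoeff
  cases l with
  | nil => rfl
  | cons p t =>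
    refine absurd hcoeff.symm (List.prod_ne_zero fun h0 => ?_)
    obtain ⟨q, hq, hq0⟩ := List.mem_map.mp h0
    exact hne q hq hq0
end
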